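/- arXiv:0802.2032 — 3 statements merged into one kernel-verified Lean document; each statement's English description precedes it below -/
import Mathlib

section
/- For d ≥ 5 and t > 0, the function M(z)² = |z|²·∫_{ℝ^d} e^{−2t|ξ|²}/|1 − z·e^{−t|ξ|²}|² dξ is uniformly bounded on the open unit disk: sup_{|z|<1} M(z) < ∞. -/
/-!
Put `x = t‖ξ‖²`. For `‖z‖ ≤ 1` we have `‖1 - z e^{-x}‖ ≥ 1 - e^{-x} ≥ x e^{-x/2}` (the latter
is `x/2 ≤ sinh (x/2)`), so the integrand is at most `e^{-x} / x²`, uniformly in `z`. In polar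
coordinates this dominating function contributes `r^{d-1} · r^{-4} e^{-t r²}`, which is
integrable on `(0, ∞)` exactly when `d > 4`.
-/

open MeasureTheory Real

lemma mul_exp_neg_half_le_one_sub_exp_neg {x : ℝ} (hx : 0 ≤ x) :
    x * exp (-(x / 2)) ≤ 1 - exp (-x) := by
  have hsinh : x / 2 ≤ sinh (x / 2) := self_le_sinh_iff.mpr (by linarith)
  have hfactor : 1 - exp (-x) = exp (-(x / 2)) * (2 * sinh (x / 2)) := by
    have hone : exp (-(x / 2)) * exp (x / 2) = 1 := by rw [← exp_add]; simp
    have hsq : exp (-(x / 2)) * exp (-(x / 2)) = exp (-x) := by rw [← exp_add]; ring_nf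
    rw [sinh_eq]
    linear_combination -hone + hsq
  rw [hfactor, mul_comm]
  gcongr
  linarith

lemma exp_neg_two_mul_div_one_sub_exp_neg_sq_le {x : ℝ} (hx : 0 < x) :
    exp (-2 * x) / (1 - exp (-x)) ^ 2 ≤ exp (-x) / x ^ 2 := by
  have hlower := mul_exp_neg_half_le_one_sub_exp_neg hx.le
  calc exp (-2 * x) / (1 - exp (-x)) ^ 2
      ≤ exp (-2 * x) / (x * exp (-(x / 2))) ^ 2 := by gcongr
    _ = exp (-x) / x ^ 2 := by
      have hhalf : exp (-(x / 2)) ^ 2 = exp (-x) := by rw [sq, ← exp_add]; ring_nf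
      have htwo : exp (-2 * x) = exp (-x) * exp (-x) := by rw [← exp_add]; ring_nf
      rw [mul_pow, hhalf, htwo]
      field_simp

lemma one_sub_le_norm_one_sub_mul_ofReal {z : ℂ} (hz : ‖z‖ ≤ 1) {w : ℝ} (hw : 0 ≤ w) :
    1 - w ≤ ‖1 - z * w‖ := by
  have hzw : ‖z * w‖ ≤ w := by
    rw [norm_mul, Complex.norm_real, Real.norm_of_nonneg hw]
    exact mul_le_of_le_one_left hw hz
  have := norm_sub_norm_le (1 : ℂ) (z * w)
  rw [norm_one] at this
  linarith

lemma exp_neg_two_mul_div_norm_one_sub_sq_le {z : ℂ} (hz : ‖z‖ ≤ 1) {x : ℝ} (hx : 0 < x) :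
    exp (-2 * x) / ‖1 - z * exp (-x)‖ ^ 2 ≤ exp (-x) / x ^ 2 := by
  have hpos : 0 < 1 - exp (-x) :=
    (by positivity : 0 < x * exp (-(x / 2))).trans_le (mul_exp_neg_half_le_one_sub_exp_neg hx.le)
  calc exp (-2 * x) / ‖1 - z * exp (-x)‖ ^ 2
      ≤ exp (-2 * x) / (1 - exp (-x)) ^ 2 := by
        gcongr
        exact one_sub_le_norm_one_sub_mul_ofReal hz (exp_pos _).le
    _ ≤ exp (-x) / x ^ 2 := exp_neg_two_mul_div_one_sub_exp_neg_sq_le hx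

lemma integrable_exp_neg_mul_norm_sq_div_sq {E : Type*} [NormedAddCommGroup E]
    [NormedSpace ℝ E] [FiniteDimensional ℝ E] [MeasurableSpace E] [BorelSpace E]
    (μ : Measure E) [μ.IsAddHaarMeasure] (hE : 5 ≤ Module.finrank ℝ E) {t : ℝ} (ht : 0 < t) :
    Integrable (fun ξ : E ↦ exp (-t * ‖ξ‖ ^ 2) / (t * ‖ξ‖ ^ 2) ^ 2) μ := by
  have : Nontrivial E := Module.nontrivial_of_finrank_pos (R := ℝ) (by omega)
  rw [integrable_fun_norm_addHaar μ (f := fun r ↦ exp (-t * r ^ 2) / (t * r ^ 2) ^ 2)]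
  have hs : (-1 : ℝ) < (Module.finrank ℝ E - 5 : ℕ) :=
    neg_one_lt_zero.trans_le (Nat.cast_nonneg _)
  have hint : IntegrableOn (fun r ↦ (t ^ 2)⁻¹ *
      (r ^ ((Module.finrank ℝ E - 5 : ℕ) : ℝ) * exp (-t * r ^ 2))) (Set.Ioi 0) :=
    (integrableOn_rpow_mul_exp_neg_mul_sq ht hs).const_mul _
  refine hint.congr_fun (fun r (hr : 0 < r) ↦ ?_) measurableSet_Ioi
  simp only [rpow_natCast, smul_eq_mul]
  rw [show Module.finrank ℝ E - 1 = (Module.finrank ℝ E - 5) + 4 by omega]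
  field_simp
  ring

theorem stmt5 (d : ℕ) (hd : 5 ≤ d) (t : ℝ) (ht : 0 < t) :
    ∃ C : ℝ, ∀ z : ℂ, ‖z‖ < 1 →
      ‖z‖ ^ 2 *
        (∫ ξ : EuclideanSpace ℝ (Fin d),
          Real.exp (-2 * t * ‖ξ‖ ^ 2) /
            ‖1 - z * (Real.exp (-t * ‖ξ‖ ^ 2) : ℂ)‖ ^ 2) ≤ C := by
  set g : EuclideanSpace ℝ (Fin d) → ℝ := fun ξ ↦ exp (-t * ‖ξ‖ ^ 2) / (t * ‖ξ‖ ^ 2) ^ 2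
  have hdim : 5 ≤ Module.finrank ℝ (EuclideanSpace ℝ (Fin d)) := by simpa using hd
  have : Nontrivial (EuclideanSpace ℝ (Fin d)) :=
    Module.nontrivial_of_finrank_pos (R := ℝ) (by omega)
  have hg : Integrable g := integrable_exp_neg_mul_norm_sq_div_sq _ hdim ht
  refine ⟨∫ ξ, g ξ, fun z hz ↦ ?_⟩
  have hnonneg : ∀ ξ : EuclideanSpace ℝ (Fin d),
      0 ≤ exp (-2 * t * ‖ξ‖ ^ 2) / ‖1 - z * (exp (-t * ‖ξ‖ ^ 2) : ℂ)‖ ^ 2 :=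
    fun ξ ↦ by positivity
  have hle : ∀ᵐ ξ : EuclideanSpace ℝ (Fin d),
      exp (-2 * t * ‖ξ‖ ^ 2) / ‖1 - z * (exp (-t * ‖ξ‖ ^ 2) : ℂ)‖ ^ 2 ≤ g ξ := by
    filter_upwards [volume.ae_ne 0] with ξ hξ
    have := exp_neg_two_mul_div_norm_one_sub_sq_le hz.le (x := t * ‖ξ‖ ^ 2) (by positivity)
    simpa only [g, neg_mul, mul_assoc] using this
  calc _ ≤ ∫ ξ : EuclideanSpace ℝ (Fin d),
          exp (-2 * t * ‖ξ‖ ^ 2) / ‖1 - z * (exp (-t * ‖ξ‖ ^ 2) : ℂ)‖ ^ 2 :=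
        mul_le_of_le_one_left (integral_nonneg hnonneg) (pow_le_one₀ (norm_nonneg z) hz.le)
    _ ≤ ∫ ξ, g ξ := integral_mono_of_nonneg (.of_forall hnonneg) hg hle
end

section
/- For d = 4 and t > 0, there is a constant C > 0 such that for all r ∈ [0,1) and θ ∈ [0,2π], the quantity M(re^{iθ})² = r²·∫_{ℝ⁴} e^{−2t|ξ|²}/|1 − re^{iθ}e^{−t|ξ|²}|² dξ satisfies M(re^{iθ})² ≤ C·log(1/(1 − r·cos θ)) + C. -/
/-!
Write `w = exp (-t|ξ|²) ∈ (0, 1]`, `z = r e^{iθ}` and `ρ = Re z = r cos θ`. Since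
`|1 - z w| ≥ Re (1 - z w) = 1 - ρ w ≥ 1 - ρ⁺ w > 0`, the integrand is at most
`w² / (1 - ρ⁺ w)² = ∑ (n + 1) ρ⁺ⁿ w^(n+2)`. In dimension 4 the Gaussian `w^(n+2)` has integral
`(π / ((n + 2) t))²`, so the integral is at most `(π / t)² ∑ ρ⁺ⁿ / (n + 1)`, which grows like
`log (1 / (1 - ρ⁺))`; for `ρ ≤ 0` the right-hand side is bounded below because `1 - ρ ≤ 2`.
-/

open MeasureTheory Real

local notation "ℝ⁴" => EuclideanSpace ℝ (Fin 4)

lemma hasSum_succ_mul_pow {x : ℝ} (hx : |x| < 1) :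
    HasSum (fun n : ℕ => ((n : ℝ) + 1) * x ^ n) (1 / (1 - x) ^ 2) := by
  simpa using hasSum_choose_mul_geometric_of_norm_lt_one 1 (r := x) hx

lemma hasSum_sq_div_one_sub_mul_sq {ρ w : ℝ} (h : |ρ * w| < 1) :
    HasSum (fun n : ℕ => ((n : ℝ) + 1) * ρ ^ n * w ^ (n + 2)) (w ^ 2 / (1 - ρ * w) ^ 2) := by
  have hterm : (fun n : ℕ => ((n : ℝ) + 1) * ρ ^ n * w ^ (n + 2))
      = fun n : ℕ => ((n : ℝ) + 1) * (ρ * w) ^ n * w ^ 2 := by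
    funext n
    ring
  rw [hterm, div_eq_mul_one_div, mul_comm (w ^ 2)]
  exact (hasSum_succ_mul_pow h).mul_right _

/- `ρⁿ / (n + 1)` is dominated termwise by this series, whose sum `1 + log (1 / (1 - ρ))` stays
bounded as `ρ → 0`, unlike `∑ ρⁿ / (n + 1) = log (1 / (1 - ρ)) / ρ`. -/
lemma hasSum_one_sub_mul_pow_add_pow_succ_div {ρ : ℝ} (h0 : 0 ≤ ρ) (h1 : ρ < 1) :
    HasSum (fun n : ℕ => (1 - ρ) * ρ ^ n + ρ ^ (n + 1) / (n + 1)) (1 + log (1 / (1 - ρ))) := by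
  have hgeom : HasSum (fun n : ℕ => (1 - ρ) * ρ ^ n) 1 := by
    simpa [mul_inv_cancel₀ (sub_ne_zero.2 h1.ne')] using
      (hasSum_geometric_of_lt_one h0 h1).mul_left (1 - ρ)
  have hlog := hasSum_pow_div_log_of_abs_lt_one (abs_lt.2 ⟨by linarith, h1⟩)
  rw [one_div, log_inv]
  exact hgeom.add hlog

lemma pow_div_succ_le_one_sub_mul_pow_add {ρ : ℝ} (h0 : 0 ≤ ρ) (h1 : ρ ≤ 1) (n : ℕ) :
    ρ ^ n / (n + 1) ≤ (1 - ρ) * ρ ^ n + ρ ^ (n + 1) / (n + 1) := by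
  have hn : (1 : ℝ) ≤ n + 1 := by simp
  have : ρ ^ n * (1 - ρ) / (n + 1) ≤ ρ ^ n * (1 - ρ) :=
    div_le_self (mul_nonneg (pow_nonneg h0 n) (by linarith)) hn
  rw [pow_succ]
  linarith [show ρ ^ n * (1 - ρ) / (n + 1) = ρ ^ n / (n + 1) - ρ ^ n * ρ / (n + 1) by ring]

lemma succ_mul_pow_mul_div_add_two_sq_le {ρ c t : ℝ} (h0 : 0 ≤ ρ) (n : ℕ) :
    ((n : ℝ) + 1) * ρ ^ n * (c / ((n + 2) * t)) ^ 2 ≤ (c / t) ^ 2 * (ρ ^ n / (n + 1)) := by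
  have hfrac : ((n : ℝ) + 1) / (n + 2) ^ 2 ≤ 1 / (n + 1) := by
    rw [div_le_div_iff₀ (by positivity) (by positivity)]
    nlinarith
  calc ((n : ℝ) + 1) * ρ ^ n * (c / ((n + 2) * t)) ^ 2
      = (c / t) ^ 2 * ρ ^ n * ((n + 1) / (n + 2) ^ 2) := by
        rw [mul_comm _ t, ← div_div, div_pow (c / t)]
        ring
    _ ≤ (c / t) ^ 2 * ρ ^ n * (1 / (n + 1)) := by gcongr
    _ = (c / t) ^ 2 * (ρ ^ n / (n + 1)) := by ring

lemma rexp_neg_mul_sq_le_one {t : ℝ} (ht : 0 ≤ t) (s : ℝ) : rexp (-t * s ^ 2) ≤ 1 :=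
  exp_le_one_iff.2 (by nlinarith [sq_nonneg s])

lemma integral_rexp_neg_mul_sq_norm_pow {t : ℝ} (ht : 0 < t) {k : ℕ} (hk : k ≠ 0) :
    ∫ ξ : ℝ⁴, rexp (-t * ‖ξ‖ ^ 2) ^ k = (π / (k * t)) ^ 2 := by
  have hkt : 0 < k * t := by positivity
  simp_rw [← exp_nat_mul, ← mul_assoc, ← neg_mul_eq_mul_neg]
  rw [GaussianFourier.integral_rexp_neg_mul_sq_norm hkt, finrank_euclideanSpace_fin]
  norm_num

lemma integrable_rexp_neg_mul_sq_norm_pow {t : ℝ} (ht : 0 < t) {k : ℕ} (hk : k ≠ 0) :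
    Integrable fun ξ : ℝ⁴ => rexp (-t * ‖ξ‖ ^ 2) ^ k :=
  .of_integral_ne_zero <| by rw [integral_rexp_neg_mul_sq_norm_pow ht hk]; positivity

lemma integral_sq_div_one_sub_mul_sq_le {t ρ : ℝ} (ht : 0 < t) (h0 : 0 ≤ ρ) (h1 : ρ < 1) :
    Integrable (fun ξ : ℝ⁴ => rexp (-t * ‖ξ‖ ^ 2) ^ 2 / (1 - ρ * rexp (-t * ‖ξ‖ ^ 2)) ^ 2) ∧
    ∫ ξ : ℝ⁴, rexp (-t * ‖ξ‖ ^ 2) ^ 2 / (1 - ρ * rexp (-t * ‖ξ‖ ^ 2)) ^ 2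
      ≤ (π / t) ^ 2 * (1 + log (1 / (1 - ρ))) := by
  set w : ℝ⁴ → ℝ := fun ξ => rexp (-t * ‖ξ‖ ^ 2)
  set F : ℕ → ℝ⁴ → ℝ := fun n ξ => ((n : ℝ) + 1) * ρ ^ n * w ξ ^ (n + 2)
  have hF_nonneg : ∀ n ξ, 0 ≤ F n ξ := fun n ξ => by positivity
  have hF_int : ∀ n, Integrable (F n) := fun n =>
    (integrable_rexp_neg_mul_sq_norm_pow ht (by omega)).const_mul _
  have hF_le : ∀ n, ∫ ξ, F n ξ ≤ (π / t) ^ 2 * ((1 - ρ) * ρ ^ n + ρ ^ (n + 1) / (n + 1)) := by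
    intro n
    rw [integral_const_mul, integral_rexp_neg_mul_sq_norm_pow ht (by omega)]
    push_cast
    calc _ ≤ (π / t) ^ 2 * (ρ ^ n / (n + 1)) := succ_mul_pow_mul_div_add_two_sq_le h0 n
      _ ≤ _ := by gcongr; exact pow_div_succ_le_one_sub_mul_pow_add h0 h1.le n
  have hF_norm : ∀ n, ∫ ξ, ‖F n ξ‖ = ∫ ξ, F n ξ := fun n =>
    integral_congr_ae (ae_of_all _ fun ξ => Real.norm_of_nonneg (hF_nonneg n ξ))
  have hmaj := (hasSum_one_sub_mul_pow_add_pow_succ_div h0 h1).mul_left ((π / t) ^ 2)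
  have hsum := hasSum_integral_of_summable_integral_norm hF_int <|
    hmaj.summable.of_nonneg_of_le (fun n => integral_nonneg (fun ξ => norm_nonneg _))
      (fun n => (hF_norm n).trans_le (hF_le n))
  have hF_tsum : ∀ ξ, ∑' n, F n ξ = w ξ ^ 2 / (1 - ρ * w ξ) ^ 2 := fun ξ => by
    refine (hasSum_sq_div_one_sub_mul_sq ?_).tsum_eq
    rw [abs_of_nonneg (by positivity)]
    exact mul_lt_one_of_nonneg_of_lt_one_left h0 h1 (rexp_neg_mul_sq_le_one ht.le _)
  simp only [hF_tsum] at hsum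
  have hF0_pos : 0 < ∫ ξ, F 0 ξ := by
    rw [integral_const_mul, integral_rexp_neg_mul_sq_norm_pow ht (by omega)]
    positivity
  refine ⟨.of_integral_ne_zero ?_, hasSum_le hF_le hsum hmaj⟩
  exact (hF0_pos.trans_le (le_hasSum hsum 0 fun n _ => integral_nonneg (hF_nonneg n))).ne'

lemma one_sub_re_mul_le_norm (z : ℂ) (w : ℝ) : 1 - z.re * w ≤ ‖1 - z * w‖ := by
  simpa using Complex.re_le_norm (1 - z * w)

lemma div_sq_norm_one_sub_mul_le {z : ℂ} {ρ w a : ℝ} (ha : 0 ≤ a) (hz : z.re ≤ ρ) (hw : 0 ≤ w)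
    (hρw : ρ * w < 1) : a / ‖1 - z * w‖ ^ 2 ≤ a / (1 - ρ * w) ^ 2 := by
  have hpos : 0 < 1 - ρ * w := by linarith
  have hle : 1 - ρ * w ≤ ‖1 - z * w‖ :=
    (by nlinarith : 1 - ρ * w ≤ 1 - z.re * w).trans (one_sub_re_mul_le_norm z w)
  gcongr

lemma one_add_log_one_div_one_sub_max_le {ρ : ℝ} (h0 : -1 ≤ ρ) (h1 : ρ < 1) :
    1 + log (1 / (1 - max ρ 0)) ≤ 4 * log (1 / (1 - ρ)) + 4 := by
  rcases le_total ρ 0 with hρ | hρ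
  · rw [max_eq_right hρ, sub_zero, div_one, log_one, one_div, log_inv]
    have : log (1 - ρ) ≤ log 2 := log_le_log (by linarith) (by linarith)
    linarith [log_two_lt_d9]
  · rw [max_eq_left hρ]
    have : 0 ≤ log (1 / (1 - ρ)) := log_nonneg (by rw [le_div_iff₀ (by linarith)]; linarith)
    linarith

open Complex

theorem stmt6 (t : ℝ) (ht : 0 < t) :
    ∃ C : ℝ, 0 < C ∧ ∀ r ∈ Set.Ico (0 : ℝ) 1, ∀ θ ∈ Set.Icc (0 : ℝ) (2 * π),
      r ^ 2 *
        (∫ ξ : EuclideanSpace ℝ (Fin 4),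
          Real.exp (-2 * t * ‖ξ‖ ^ 2) /
            (‖(1 - (r : ℂ) * Complex.exp (θ * Complex.I) *
              (Real.exp (-t * ‖ξ‖ ^ 2) : ℂ))‖) ^ 2)
      ≤ C * Real.log (1 / (1 - r * Real.cos θ)) + C := by
  refine ⟨4 * (π / t) ^ 2, by positivity, fun r ⟨hr0, hr1⟩ θ _ => ?_⟩
  set ρ := r * Real.cos θ
  have hρ : |ρ| ≤ r := by
    rw [abs_mul, abs_of_nonneg hr0]
    exact mul_le_of_le_one_right hr0 (abs_cos_le_one θ)
  have hρ1 : ρ < 1 := (le_abs_self ρ).trans_lt (hρ.trans_lt hr1)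
  have hρmax : max ρ 0 < 1 := max_lt hρ1 one_pos
  obtain ⟨hint, hbound⟩ := integral_sq_div_one_sub_mul_sq_le ht (le_max_right ρ 0) hρmax
  have hpt : ∀ ξ : ℝ⁴, rexp (-2 * t * ‖ξ‖ ^ 2) /
      ‖1 - r * Complex.exp (θ * Complex.I) * rexp (-t * ‖ξ‖ ^ 2)‖ ^ 2
      ≤ rexp (-t * ‖ξ‖ ^ 2) ^ 2 / (1 - max ρ 0 * rexp (-t * ‖ξ‖ ^ 2)) ^ 2 := by
    intro ξ
    have hre : (r * Complex.exp (θ * Complex.I)).re = ρ := by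
      rw [re_ofReal_mul, exp_ofReal_mul_I_re]
    rw [show rexp (-2 * t * ‖ξ‖ ^ 2) = rexp (-t * ‖ξ‖ ^ 2) ^ 2 by
      rw [← Real.exp_nat_mul]; push_cast; ring_nf]
    exact div_sq_norm_one_sub_mul_le (by positivity) (hre.trans_le (le_max_left ρ 0))
      (exp_pos _).le (mul_lt_one_of_nonneg_of_lt_one_left (le_max_right ρ 0) hρmax
        (rexp_neg_mul_sq_le_one ht.le _))
  calc _ ≤ ∫ ξ : ℝ⁴, rexp (-2 * t * ‖ξ‖ ^ 2) /
          ‖1 - r * Complex.exp (θ * Complex.I) * rexp (-t * ‖ξ‖ ^ 2)‖ ^ 2 :=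
        mul_le_of_le_one_left (integral_nonneg fun ξ => by positivity) (by nlinarith)
    _ ≤ _ := integral_mono_of_nonneg (ae_of_all _ fun ξ => by positivity) hint (ae_of_all _ hpt)
    _ ≤ _ := hbound
    _ ≤ (π / t) ^ 2 * (4 * Real.log (1 / (1 - ρ)) + 4) := mul_le_mul_of_nonneg_left
        (one_add_log_one_div_one_sub_max_le (by linarith [neg_abs_le ρ]) hρ1) (by positivity)
    _ = _ := by ring
end

section
/- Let h be holomorphic on the open unit disk with h(0) = 1, and suppose there is C such that log|h(z)| ≤ C for all |z| < 1. Then the sum ∑ log(1/|z_k|) over the zeros z_k of h in the unit disk (counted with multiplicity) is at most C. -/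
/-!
By Jensen's formula, for `0 < r < 1` the circle average of `log ‖h‖` over `‖z‖ = r` equals
`log ‖h 0‖ = 0` plus `∑ log (r / ‖u‖)` over the zeros `u` in the closed disc of radius `r`,
counted with multiplicity. Every term is nonnegative and the average is at most `C`, so the sum
over the given zeros is at most `C` once `r` exceeds their moduli; let `r → 1`.
-/

open Metric Filter Topology MeromorphicOn

theorem Finset.sum_le_finsum_of_nonneg {α : Type*} {f : α → ℝ} (s : Finset α)
    (hf : f.support.Finite) (hf₀ : 0 ≤ f) : ∑ x ∈ s, f x ≤ ∑ᶠ x, f x := by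
  classical
  rw [finsum_eq_sum_of_support_subset f (s := s ∪ hf.toFinset) (by simp)]
  exact Finset.sum_le_sum_of_subset_of_nonneg Finset.subset_union_left fun x _ _ ↦ hf₀ x

theorem AnalyticOnNhd.one_le_divisor_of_isPreconnected {U : Set ℂ} {f : ℂ → ℂ} {c z : ℂ}
    (hf : AnalyticOnNhd ℂ f U) (hU : IsPreconnected U) (hcU : c ∈ U) (hc : f c ≠ 0)
    (hzU : z ∈ U) (hz : f z = 0) : 1 ≤ divisor f U z := by
  have hfin : analyticOrderAt f z ≠ ⊤ :=
    hf.analyticOrderAt_ne_top_of_isPreconnected hU hcU hzU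
      (by simp [(hf c hcU).analyticOrderAt_eq_zero.mpr hc])
  have hpos : analyticOrderAt f z ≠ 0 := (hf z hzU).analyticOrderAt_ne_zero.mpr hz
  obtain ⟨n, hn⟩ := ENat.ne_top_iff_exists.mp hfin
  rw [← hn] at hpos
  rw [hf.divisor_apply hzU, ← hn]
  simpa [Nat.one_le_iff_ne_zero] using hpos

theorem log_mul_inv_norm_sub_nonneg_of_mem_closedBall {c u : ℂ} {R : ℝ}
    (hu : u ∈ closedBall c |R|) :
    0 ≤ Real.log (R * ‖c - u‖⁻¹) := by
  rcases eq_or_ne u c with rfl | hne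
  · simp
  rw [← Real.log_abs, abs_mul, abs_inv, abs_norm]
  have hnorm : 0 < ‖c - u‖ := norm_pos_iff.mpr (sub_ne_zero.mpr hne.symm)
  refine Real.log_nonneg ((le_mul_inv_iff₀ hnorm).mpr ?_)
  simpa [dist_comm, dist_eq_norm] using hu

theorem AnalyticOnNhd.sum_log_le_circleAverage_log_norm {c : ℂ} {R : ℝ} {f : ℂ → ℂ}
    (hR : R ≠ 0) (hf : AnalyticOnNhd ℂ f (closedBall c |R|)) (hc : f c ≠ 0) (s : Finset ℂ)
    (hs : ∀ z ∈ s, z ∈ closedBall c |R| ∧ f z = 0) :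
    ∑ z ∈ s, Real.log (R * ‖c - z‖⁻¹) + Real.log ‖f c‖
      ≤ Real.circleAverage (Real.log ‖f ·‖) c R := by
  rw [hf.circleAverage_log_norm hR hc, add_le_add_iff_right]
  set D := divisor f (closedBall c |R|)
  calc ∑ z ∈ s, Real.log (R * ‖c - z‖⁻¹)
      ≤ ∑ z ∈ s, D z * Real.log (R * ‖c - z‖⁻¹) := by
        refine Finset.sum_le_sum fun z hz ↦ ?_
        obtain ⟨hzB, hz0⟩ := hs z hz
        have hD : 1 ≤ D z := hf.one_le_divisor_of_isPreconnected
          (convex_closedBall c |R|).isPreconnected (mem_closedBall_self (abs_nonneg R)) hc hzB hz0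
        exact le_mul_of_one_le_left (log_mul_inv_norm_sub_nonneg_of_mem_closedBall hzB)
          (mod_cast hD)
    _ ≤ ∑ᶠ u, D u * Real.log (R * ‖c - u‖⁻¹) := by
        refine s.sum_le_finsum_of_nonneg ?_ fun u ↦ ?_
        · exact (D.finiteSupport (isCompact_closedBall c |R|)).subset
            fun u hu ↦ by simpa using left_ne_zero_of_mul hu
        · by_cases hu : u ∈ closedBall c |R|
          · exact mul_nonneg (Int.cast_nonneg (hf.divisor_nonneg u))
              (log_mul_inv_norm_sub_nonneg_of_mem_closedBall hu)
          · simp [D, hu]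

theorem AnalyticOnNhd.sum_log_le_of_log_norm_le_on_sphere {c : ℂ} {R C : ℝ} {f : ℂ → ℂ}
    (hR : R ≠ 0) (hf : AnalyticOnNhd ℂ f (closedBall c |R|)) (hc : f c ≠ 0)
    (hC : ∀ z ∈ sphere c |R|, Real.log ‖f z‖ ≤ C) (s : Finset ℂ)
    (hs : ∀ z ∈ s, z ∈ closedBall c |R| ∧ f z = 0) :
    ∑ z ∈ s, Real.log (R * ‖c - z‖⁻¹) + Real.log ‖f c‖ ≤ C :=
  (hf.sum_log_le_circleAverage_log_norm hR hc s hs).trans <|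
    Real.circleAverage_mono_on_of_le_circle
      (hf.mono sphere_subset_closedBall).meromorphicOn.circleIntegrable_log_norm hC

/-- Jensen bound: if h is holomorphic on the unit disk, h(0)=1 and log|h| ≤ C on the
disk, then any finite collection of distinct zeros z_k of h in the disk satisfies
∑ log(1/|z_k|) ≤ C. -/
theorem stmt7 (h : ℂ → ℂ) (hh : DifferentiableOn ℂ h (Metric.ball (0 : ℂ) 1))
    (h0 : h 0 = 1) (C : ℝ) (hC : ∀ z ∈ Metric.ball (0 : ℂ) 1, Real.log ‖h z‖ ≤ C) :
    ∀ s : Finset ℂ, (∀ z ∈ s, z ∈ Metric.ball (0 : ℂ) 1 ∧ h z = 0) →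
      ∑ z ∈ s, Real.log (1 / ‖z‖) ≤ C := by
  intro s hs
  have hs_norm : ∀ z ∈ s, ‖z‖ < 1 := fun z hz ↦ mem_ball_zero_iff.mp (hs z hz).1
  have hs_ne : ∀ z ∈ s, z ≠ 0 := fun z hz h0z ↦ by simpa [h0z, h0] using (hs z hz).2
  have hbound : ∀ᶠ r in 𝓝[<] 1, ∑ z ∈ s, Real.log (r * ‖z‖⁻¹) ≤ C := by
    filter_upwards [Ioo_mem_nhdsLT zero_lt_one,
      s.eventually_all.2 fun z hz ↦ Ioo_mem_nhdsLT (hs_norm z hz)] with r hr hsr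
    have hball : closedBall (0 : ℂ) |r| ⊆ ball 0 1 :=
      closedBall_subset_ball ((abs_of_pos hr.1).trans_lt hr.2)
    simpa [h0] using (hh.analyticOnNhd isOpen_ball).mono hball
      |>.sum_log_le_of_log_norm_le_on_sphere hr.1.ne' (by simp [h0])
        (fun z hz ↦ hC z (hball (sphere_subset_closedBall hz))) s
        (fun z hz ↦ ⟨by simpa [abs_of_pos hr.1] using (hsr z hz).1.le, (hs z hz).2⟩)
  have hlim : Tendsto (fun r : ℝ ↦ ∑ z ∈ s, Real.log (r * ‖z‖⁻¹)) (𝓝[<] 1)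
      (𝓝 (∑ z ∈ s, Real.log (1 / ‖z‖))) := by
    have hcont : ∀ z ∈ s, ContinuousAt (fun r : ℝ ↦ Real.log (r * ‖z‖⁻¹)) 1 := fun z hz ↦ by
      fun_prop (disch := simpa using hs_ne z hz)
    simpa using
      (tendsto_finsetSum s fun z hz ↦ (hcont z hz).tendsto).mono_left nhdsWithin_le_nhds
  exact le_of_tendsto hlim hbound
end
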